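/- Let γ : 𝕊¹ → ℝ² be a Lipschitz curve and let σ : 𝕊¹ → 𝕊¹ be a bi-Lipschitz homeomorphism. Then 𝒜(γ) = 𝒜(γ ∘ σ). -/

import Mathlib

open MeasureTheory Metric Filter Set

noncomputable section

/-- The unit circle `𝕊¹ ⊆ ℝ² ≃ ℂ`. -/
def unitCircle : Set ℂ := Metric.sphere 0 1

/-- The closed unit disk `D ⊆ ℝ² ≃ ℂ`. -/
def unitDisk : Set ℂ := Metric.closedBall 0 1

/-- The standard parametrization `t ↦ e^{2πit}` of the unit circle. -/
def circleParam (t : ℝ) : ℂ := Complex.exp (2 * Real.pi * t * Complex.I)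

/-- The area functional `A(ψ) = ∫_D |det ∇ψ| dx`. -/
def areaFunctional (ψ : ℂ → ℂ) : ℝ :=
  ∫ x in unitDisk, |(fderiv ℝ ψ x).det|

/-- `𝒜(γ)`: the infimum of `A(ψ)` over all Lipschitz maps `ψ : D → ℝ²` with `ψ = γ` on `𝕊¹`. -/
def minSpanArea (γ : ℂ → ℂ) : ℝ :=
  sInf {a : ℝ | ∃ ψ : ℂ → ℂ, (∃ K : NNReal, LipschitzWith K ψ) ∧
    (∀ z ∈ unitCircle, ψ z = γ z) ∧ a = areaFunctional ψ}


/-- Measurable equivalence between `ℂ` and `Fin 2 → ℝ`. -/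
def cEquiv : ℂ ≃ᵐ (Fin 2 → ℝ) :=
  Complex.measurableEquivRealProd.trans (MeasurableEquiv.finTwoArrow).symm

lemma cEquiv_mp : MeasurePreserving (⇑cEquiv) volume volume := by
  have h := ((volume_preserving_finTwoArrow ℝ).symm MeasurableEquiv.finTwoArrow).comp
    Complex.volume_preserving_equiv_real_prod
  exact h

lemma cEquiv_symm_mp : MeasurePreserving (⇑cEquiv.symm) volume volume :=
  cEquiv_mp.symm cEquiv

lemma volume_image_cEquiv (s : Set ℂ) : volume (⇑cEquiv '' s) = volume s := by
  rw [MeasurableEquiv.image_eq_preimage_symm]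
  calc volume (cEquiv.symm ⁻¹' s) = (volume.map ⇑cEquiv.symm) s :=
        (MeasurableEquiv.map_apply _ _).symm
    _ = volume s := by rw [cEquiv_symm_mp.map_eq]

lemma cEquiv_apply (z : ℂ) (i : Fin 2) : cEquiv z i = ![z.re, z.im] i := by
  fin_cases i <;> rfl

lemma cEquiv_symm_apply (p : Fin 2 → ℝ) : cEquiv.symm p = Complex.mk (p 0) (p 1) := rfl

lemma cEquiv_lip : LipschitzWith 1 (⇑cEquiv) := by
  apply LipschitzWith.of_dist_le_mul
  intro x y
  rw [NNReal.coe_one, one_mul]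
  refine (dist_pi_le_iff dist_nonneg).2 fun i => ?_
  fin_cases i
  · show dist x.re y.re ≤ _
    rw [Real.dist_eq, Complex.dist_eq, ← Complex.sub_re]
    exact Complex.abs_re_le_norm _
  · show dist x.im y.im ≤ _
    rw [Real.dist_eq, Complex.dist_eq, ← Complex.sub_im]
    exact Complex.abs_im_le_norm _

lemma cEquiv_symm_lip : LipschitzWith 2 (⇑cEquiv.symm) := by
  apply LipschitzWith.of_dist_le_mul
  intro p q
  rw [cEquiv_symm_apply, cEquiv_symm_apply, Complex.dist_eq]
  have : Complex.mk (p 0) (p 1) - Complex.mk (q 0) (q 1) =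
      Complex.mk (p 0 - q 0) (p 1 - q 1) := by
    apply Complex.ext <;> simp
  rw [this]
  calc ‖Complex.mk (p 0 - q 0) (p 1 - q 1)‖
      ≤ |p 0 - q 0| + |p 1 - q 1| := by
        simpa using Complex.norm_le_abs_re_add_abs_im (Complex.mk (p 0 - q 0) (p 1 - q 1))
    _ ≤ dist p q + dist p q := by
        gcongr
        · exact (Real.dist_eq _ _) ▸ dist_le_pi_dist p q 0
        · exact (Real.dist_eq _ _) ▸ dist_le_pi_dist p q 1
    _ = 2 * dist p q := by ring

lemma volume_pi_eq_hausdorff : (volume : Measure (Fin 2 → ℝ)) = μH[2] := by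
  have h : (μH[(Fintype.card (Fin 2) : ℝ)] : Measure (Fin 2 → ℝ)) = volume :=
    MeasureTheory.hausdorffMeasure_pi_real
  simp only [Fintype.card_fin, Nat.cast_ofNat] at h
  exact h.symm

lemma lipschitz_image_null {K : NNReal} {f : ℂ → ℂ} (hf : LipschitzWith K f)
    {s : Set ℂ} (hs : volume s = 0) : volume (f '' s) = 0 := by
  have h1 : volume (f '' s) = volume (⇑cEquiv '' (f '' s)) := (volume_image_cEquiv _).symm
  have h2 : ⇑cEquiv '' (f '' s) = (⇑cEquiv ∘ f ∘ ⇑cEquiv.symm) '' (⇑cEquiv '' s) := by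
    rw [image_image, image_image]
    apply image_congr
    intro x _
    simp [Function.comp]
  have hg : LipschitzWith (2 * (1 * K)) ((⇑cEquiv ∘ f) ∘ ⇑cEquiv.symm) := by
    exact ((cEquiv_lip.comp hf).comp cEquiv_symm_lip).weaken (by rw [mul_comm])
  have ht : volume (⇑cEquiv '' s) = 0 := by rw [volume_image_cEquiv]; exact hs
  rw [h1, h2]
  have hb := hg.hausdorffMeasure_image_le (by norm_num : (0:ℝ) ≤ 2) (⇑cEquiv '' s)
  rw [volume_pi_eq_hausdorff]
  refine le_antisymm (le_trans hb ?_) zero_le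
  rw [← volume_pi_eq_hausdorff, ht, mul_zero]


lemma abs_det_le_sq (L : ℂ →L[ℝ] ℂ) : |L.det| ≤ 2 * ‖L‖ ^ 2 := by
  have hdet : L.det = LinearMap.det (L : ℂ →ₗ[ℝ] ℂ) := rfl
  rw [hdet, ← LinearMap.det_toMatrix Complex.basisOneI, Matrix.det_fin_two]
  have he : ∀ (j : Fin 2), Complex.basisOneI j = ![1, Complex.I] j := by
    intro j; rw [← Complex.coe_basisOneI]
  have hb : ∀ (i j : Fin 2),
      |LinearMap.toMatrix Complex.basisOneI Complex.basisOneI (L : ℂ →ₗ[ℝ] ℂ) i j| ≤ ‖L‖ := by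
    intro i j
    rw [LinearMap.toMatrix_apply]
    have h1 : ⇑(Complex.basisOneI.repr ((L : ℂ →ₗ[ℝ] ℂ) (Complex.basisOneI j)))
        = ![((L : ℂ →ₗ[ℝ] ℂ) (Complex.basisOneI j)).re,
            ((L : ℂ →ₗ[ℝ] ℂ) (Complex.basisOneI j)).im] := Complex.coe_basisOneI_repr _
    have hnorm : ‖(L : ℂ →ₗ[ℝ] ℂ) (Complex.basisOneI j)‖ ≤ ‖L‖ := by
      have : (L : ℂ →ₗ[ℝ] ℂ) (Complex.basisOneI j) = L (Complex.basisOneI j) := rfl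
      rw [this]
      calc ‖L (Complex.basisOneI j)‖ ≤ ‖L‖ * ‖Complex.basisOneI j‖ := L.le_opNorm _
        _ = ‖L‖ := by
            rw [he j]
            fin_cases j <;> simp
    have := congrFun h1 i
    rw [this]
    fin_cases i
    · exact le_trans (Complex.abs_re_le_norm _) hnorm
    · exact le_trans (Complex.abs_im_le_norm _) hnorm
  calc |_ * _ - _ * _| ≤ |_ * _| + |_ * _| := abs_sub _ _
    _ ≤ ‖L‖ * ‖L‖ + ‖L‖ * ‖L‖ := by
        rw [abs_mul, abs_mul]
        gcongr <;> first | exact hb _ _ | positivity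
    _ = 2 * ‖L‖ ^ 2 := by ring

lemma abs_det_fderiv_le {K : NNReal} {ψ : ℂ → ℂ} (hψ : LipschitzWith K ψ) (x : ℂ) :
    |(fderiv ℝ ψ x).det| ≤ 2 * (K : ℝ) ^ 2 := by
  refine le_trans (abs_det_le_sq _) ?_
  have h := norm_fderiv_le_of_lipschitz ℝ hψ (x₀ := x)
  gcongr

lemma measurable_abs_det_fderiv (ψ : ℂ → ℂ) :
    Measurable (fun x => |(fderiv ℝ ψ x).det|) := by
  have h1 : Measurable (fderiv ℝ ψ) := measurable_fderiv ℝ ψ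
  exact (continuous_abs.comp ContinuousLinearMap.continuous_det).measurable.comp h1

lemma integrableOn_abs_det_fderiv {K : NNReal} {ψ : ℂ → ℂ} (hψ : LipschitzWith K ψ) :
    IntegrableOn (fun x => |(fderiv ℝ ψ x).det|) unitDisk := by
  refine Measure.integrableOn_of_bounded (M := 2 * (K:ℝ)^2) ?_
    (measurable_abs_det_fderiv ψ).aestronglyMeasurable ?_
  · show volume (Metric.closedBall (0:ℂ) 1) ≠ ⊤
    exact (measure_closedBall_lt_top).ne
  refine Eventually.of_forall fun x => ?_
  rw [Real.norm_eq_abs, abs_abs]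
  exact abs_det_fderiv_le hψ x

lemma areaFunctional_nonneg' (ψ : ℂ → ℂ) : 0 ≤ ∫ x in unitDisk, |(fderiv ℝ ψ x).det| :=
  integral_nonneg fun x => abs_nonneg _


/-- Radial (cone) extension of a circle map to the plane. -/
def radExt (σ : ℂ → ℂ) (z : ℂ) : ℂ := (‖z‖ : ℂ) * σ (z / (‖z‖ : ℂ))

lemma mem_unitCircle_iff {z : ℂ} : z ∈ unitCircle ↔ ‖z‖ = 1 := by
  simp [unitCircle, mem_sphere_iff_norm]

lemma div_norm_mem_unitCircle {z : ℂ} (hz : z ≠ 0) : z / (‖z‖ : ℂ) ∈ unitCircle := by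
  rw [mem_unitCircle_iff, norm_div, Complex.norm_real, norm_norm,
    div_self (norm_ne_zero_iff.mpr hz)]

lemma radExt_zero (σ : ℂ → ℂ) : radExt σ 0 = 0 := by
  simp [radExt]

lemma norm_radExt {σ : ℂ → ℂ} (hm : MapsTo σ unitCircle unitCircle) (z : ℂ) :
    ‖radExt σ z‖ = ‖z‖ := by
  rcases eq_or_ne z 0 with rfl | hz
  · simp [radExt]
  · rw [radExt, norm_mul, Complex.norm_real, norm_norm,
      mem_unitCircle_iff.mp (hm (div_norm_mem_unitCircle hz)), mul_one]

lemma radExt_eq_on_circle {σ : ℂ → ℂ} {z : ℂ} (hz : z ∈ unitCircle) : radExt σ z = σ z := by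
  rw [radExt, mem_unitCircle_iff.mp hz]
  simp

lemma key_ineq {x y : ℂ} (hy : y ≠ 0) (hxy : ‖y‖ ≤ ‖x‖) :
    ‖x‖ * ‖x / (‖x‖ : ℂ) - y / (‖y‖ : ℂ)‖ ≤ 2 * ‖x - y‖ := by
  have hy' : (0:ℝ) < ‖y‖ := norm_pos_iff.mpr hy
  have hx' : (0:ℝ) < ‖x‖ := lt_of_lt_of_le hy' hxy
  have hx : x ≠ 0 := norm_pos_iff.mp hx'
  have hxc : ((‖x‖:ℝ) : ℂ) ≠ 0 := Complex.ofReal_ne_zero.mpr hx'.ne'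
  have hyc : ((‖y‖:ℝ) : ℂ) ≠ 0 := Complex.ofReal_ne_zero.mpr hy'.ne'
  have h1 : ((‖x‖:ℝ) : ℂ) * (x / (‖x‖ : ℂ) - y / (‖y‖ : ℂ))
      = x - (((‖x‖ / ‖y‖ : ℝ)) : ℂ) * y := by
    have hcan : ((‖x‖:ℝ) : ℂ) * (x / (‖x‖ : ℂ)) = x := by
      rw [mul_comm, div_mul_cancel₀ _ hxc]
    rw [mul_sub, hcan, Complex.ofReal_div, div_mul_eq_mul_div, mul_div_assoc]
  have h2 : ‖x‖ * ‖x / (‖x‖ : ℂ) - y / (‖y‖ : ℂ)‖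
      = ‖x - (((‖x‖ / ‖y‖ : ℝ)) : ℂ) * y‖ := by
    rw [← h1, norm_mul, Complex.norm_real, norm_norm]
  rw [h2]
  have h3 : x - (((‖x‖ / ‖y‖ : ℝ)) : ℂ) * y
      = (x - y) + (y - (((‖x‖ / ‖y‖ : ℝ)) : ℂ) * y) := by ring
  have h4 : ‖y - (((‖x‖ / ‖y‖ : ℝ)) : ℂ) * y‖ = ‖x‖ - ‖y‖ := by
    have : y - (((‖x‖ / ‖y‖ : ℝ)) : ℂ) * y = ((1 - ‖x‖ / ‖y‖ : ℝ) : ℂ) * y := by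
      push_cast; ring
    rw [this, norm_mul, Complex.norm_real, Real.norm_eq_abs]
    have hle : (1:ℝ) ≤ ‖x‖ / ‖y‖ := (one_le_div hy').mpr hxy
    rw [abs_of_nonpos (by linarith), neg_sub, sub_mul, one_mul,
      div_mul_cancel₀ _ hy'.ne']
  calc ‖x - (((‖x‖ / ‖y‖ : ℝ)) : ℂ) * y‖
      ≤ ‖x - y‖ + ‖y - (((‖x‖ / ‖y‖ : ℝ)) : ℂ) * y‖ := by rw [h3]; exact norm_add_le _ _
    _ ≤ ‖x - y‖ + ‖x - y‖ := by
        rw [h4]; gcongr; exact (norm_sub_norm_le x y)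
    _ = 2 * ‖x - y‖ := by ring

lemma radExt_norm_sub_le {σ : ℂ → ℂ} {K : NNReal}
    (hm : MapsTo σ unitCircle unitCircle) (hl : LipschitzOnWith K σ unitCircle)
    {x y : ℂ} (hy0 : y ≠ 0) (hxy : ‖y‖ ≤ ‖x‖) :
    ‖radExt σ x - radExt σ y‖ ≤ (1 + 2 * K) * ‖x - y‖ := by
  have hy' : (0:ℝ) < ‖y‖ := norm_pos_iff.mpr hy0
  have hx' : (0:ℝ) < ‖x‖ := lt_of_lt_of_le hy' hxy
  have hx0 : x ≠ 0 := norm_pos_iff.mp hx'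
  set x' := x / (‖x‖ : ℂ) with hx'def
  set y' := y / (‖y‖ : ℂ) with hy'def
  have hx'm : x' ∈ unitCircle := div_norm_mem_unitCircle hx0
  have hy'm : y' ∈ unitCircle := div_norm_mem_unitCircle hy0
  have hsplit : radExt σ x - radExt σ y
      = (((‖x‖ - ‖y‖ : ℝ)) : ℂ) * σ x' + ((‖y‖ : ℝ) : ℂ) * (σ x' - σ y') := by
    rw [radExt, radExt]
    push_cast
    ring
  have hσx' : ‖σ x'‖ = 1 := mem_unitCircle_iff.mp (hm hx'm)
  have hσd : ‖σ x' - σ y'‖ ≤ K * ‖x' - y'‖ := by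
    have := hl.dist_le_mul x' hx'm y' hy'm
    rwa [dist_eq_norm, dist_eq_norm] at this
  calc ‖radExt σ x - radExt σ y‖
      ≤ ‖(((‖x‖ - ‖y‖ : ℝ)) : ℂ) * σ x'‖ + ‖((‖y‖ : ℝ) : ℂ) * (σ x' - σ y')‖ := by
        rw [hsplit]; exact norm_add_le _ _
    _ = |‖x‖ - ‖y‖| + ‖y‖ * ‖σ x' - σ y'‖ := by
        rw [norm_mul, norm_mul, Complex.norm_real, Complex.norm_real, hσx', mul_one,
          Real.norm_eq_abs, Real.norm_eq_abs, abs_of_nonneg hy'.le]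
    _ ≤ ‖x - y‖ + K * (‖x‖ * ‖x' - y'‖) := by
        have hyK : ‖y‖ * ‖σ x' - σ y'‖ ≤ (K:ℝ) * (‖x‖ * ‖x' - y'‖) :=
          calc ‖y‖ * ‖σ x' - σ y'‖ ≤ ‖y‖ * ((K:ℝ) * ‖x' - y'‖) :=
                mul_le_mul_of_nonneg_left hσd (norm_nonneg y)
            _ ≤ ‖x‖ * ((K:ℝ) * ‖x' - y'‖) :=
                mul_le_mul_of_nonneg_right hxy (by positivity)
            _ = (K:ℝ) * (‖x‖ * ‖x' - y'‖) := by ring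
        exact add_le_add (abs_norm_sub_norm_le x y) hyK
    _ ≤ ‖x - y‖ + K * (2 * ‖x - y‖) :=
        add_le_add le_rfl (mul_le_mul_of_nonneg_left (key_ineq hy0 hxy) K.coe_nonneg)
    _ = (1 + 2 * K) * ‖x - y‖ := by ring

lemma radExt_lipschitz {σ : ℂ → ℂ} {K : NNReal}
    (hm : MapsTo σ unitCircle unitCircle) (hl : LipschitzOnWith K σ unitCircle) :
    LipschitzWith (1 + 2 * K) (radExt σ) := by
  apply LipschitzWith.of_dist_le_mul
  intro x y
  have hc : ((1 + 2 * K : NNReal) : ℝ) = 1 + 2 * (K:ℝ) := by push_cast; ring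
  have hone : (1:ℝ) ≤ ((1 + 2 * K : NNReal) : ℝ) := by
    rw [hc]; linarith [NNReal.coe_nonneg K]
  rw [dist_eq_norm, dist_eq_norm]
  rcases eq_or_ne y 0 with rfl | hy0
  · rw [radExt_zero, sub_zero, sub_zero, norm_radExt hm]
    nlinarith [norm_nonneg x]
  rcases eq_or_ne x 0 with rfl | hx0
  · rw [radExt_zero, zero_sub, norm_neg, norm_radExt hm, zero_sub, norm_neg]
    nlinarith [norm_nonneg y]
  rcases le_total ‖y‖ ‖x‖ with h | h
  · rw [hc]
    exact radExt_norm_sub_le hm hl hy0 h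
  · rw [norm_sub_rev (radExt σ x), norm_sub_rev x, hc]
    exact radExt_norm_sub_le hm hl hx0 h

lemma radExt_comp {σ ρ : ℂ → ℂ} (hm : MapsTo σ unitCircle unitCircle)
    (hinv : ∀ z ∈ unitCircle, ρ (σ z) = z) (z : ℂ) :
    radExt ρ (radExt σ z) = z := by
  rcases eq_or_ne z 0 with rfl | hz
  · rw [radExt_zero, radExt_zero]
  · have hz' : (0:ℝ) < ‖z‖ := norm_pos_iff.mpr hz
    have hzc : ((‖z‖:ℝ) : ℂ) ≠ 0 := Complex.ofReal_ne_zero.mpr hz'.ne'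
    have hmem : z / (‖z‖ : ℂ) ∈ unitCircle := div_norm_mem_unitCircle hz
    have hnorm : ‖radExt σ z‖ = ‖z‖ := norm_radExt hm z
    show ((‖radExt σ z‖ : ℝ) : ℂ) * ρ (radExt σ z / ((‖radExt σ z‖ : ℝ) : ℂ)) = z
    rw [hnorm]
    have harg : radExt σ z / ((‖z‖:ℝ) : ℂ) = σ (z / (‖z‖ : ℂ)) := by
      rw [radExt, mul_comm, mul_div_assoc, div_self hzc, mul_one]
    rw [harg, hinv _ hmem, mul_comm, div_mul_cancel₀ _ hzc]

lemma areaFunctional_nonneg (ψ : ℂ → ℂ) : 0 ≤ areaFunctional ψ :=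
  integral_nonneg fun _ => abs_nonneg _

lemma complex_re_lip : LipschitzWith 1 Complex.re := by
  apply LipschitzWith.of_dist_le_mul
  intro x y
  rw [NNReal.coe_one, one_mul, Real.dist_eq, Complex.dist_eq, ← Complex.sub_re]
  exact Complex.abs_re_le_norm _

lemma complex_im_lip : LipschitzWith 1 Complex.im := by
  apply LipschitzWith.of_dist_le_mul
  intro x y
  rw [NNReal.coe_one, one_mul, Real.dist_eq, Complex.dist_eq, ← Complex.sub_im]
  exact Complex.abs_im_le_norm _

/-- Any `ℂ`-valued Lipschitz map on a set extends to a globally Lipschitz map. -/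
lemma exists_lipschitz_extension {K : NNReal} {f : ℂ → ℂ} {s : Set ℂ}
    (hf : LipschitzOnWith K f s) :
    ∃ (K' : NNReal) (g : ℂ → ℂ), LipschitzWith K' g ∧ EqOn f g s := by
  have hre : LipschitzOnWith (1 * K) (fun z => (f z).re) s :=
    complex_re_lip.comp_lipschitzOnWith hf
  have him : LipschitzOnWith (1 * K) (fun z => (f z).im) s :=
    complex_im_lip.comp_lipschitzOnWith hf
  obtain ⟨g1, hg1, he1⟩ := hre.extend_real
  obtain ⟨g2, hg2, he2⟩ := him.extend_real
  refine ⟨1 * K + 1 * K, fun z => Complex.mk (g1 z) (g2 z), ?_, ?_⟩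
  · apply LipschitzWith.of_dist_le_mul
    intro x y
    rw [Complex.dist_eq]
    have hd : Complex.mk (g1 x) (g2 x) - Complex.mk (g1 y) (g2 y)
        = Complex.mk (g1 x - g1 y) (g2 x - g2 y) := by
      apply Complex.ext <;> simp
    rw [hd]
    calc ‖Complex.mk (g1 x - g1 y) (g2 x - g2 y)‖
        ≤ |g1 x - g1 y| + |g2 x - g2 y| := by
          simpa using Complex.norm_le_abs_re_add_abs_im (Complex.mk (g1 x - g1 y) (g2 x - g2 y))
      _ ≤ (1 * K) * dist x y + (1 * K) * dist x y := by
          gcongr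
          · exact (Real.dist_eq _ _) ▸ hg1.dist_le_mul x y
          · exact (Real.dist_eq _ _) ▸ hg2.dist_le_mul x y
      _ = ((1 * K + 1 * K : NNReal) : ℝ) * dist x y := by push_cast; ring
  · intro z hz
    have h1 := he1 hz
    have h2 := he2 hz
    apply Complex.ext
    · exact h1
    · exact h2

/-- The central comparison: composing a competitor with the radial extension of `σ`
    produces a competitor for `γ ∘ σ` with no larger area. -/
lemma minSpanArea_comp_le (γ σ ρ : ℂ → ℂ)
    (hγ : ∃ K : NNReal, LipschitzOnWith K γ unitCircle)
    (hσm : MapsTo σ unitCircle unitCircle) (hρm : MapsTo ρ unitCircle unitCircle)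
    (hσl : ∃ K : NNReal, LipschitzOnWith K σ unitCircle)
    (hρl : ∃ K : NNReal, LipschitzOnWith K ρ unitCircle)
    (hinv : ∀ z ∈ unitCircle, ρ (σ z) = z) :
    minSpanArea (γ ∘ σ) ≤ minSpanArea γ := by
  classical
  obtain ⟨Kσ, hσ⟩ := hσl
  obtain ⟨Kρ, hρ⟩ := hρl
  set τ : ℂ → ℂ := radExt σ with hτdef
  set υ : ℂ → ℂ := radExt ρ with hυdef
  have hτl : LipschitzWith (1 + 2 * Kσ) τ := radExt_lipschitz hσm hσ
  have hυl : LipschitzWith (1 + 2 * Kρ) υ := radExt_lipschitz hρm hρ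
  have hυτ : ∀ z, υ (τ z) = z := radExt_comp hσm hinv
  have hτinj : Function.Injective τ := fun a b hab => by
    have h := congrArg υ hab
    rwa [hυτ, hυτ] at h
  have hτD : MapsTo τ unitDisk unitDisk := by
    intro z hz
    simp only [unitDisk, mem_closedBall, dist_zero_right] at hz ⊢
    rw [hτdef, norm_radExt hσm]
    exact hz
  -- the two competitor sets
  set S₁ : Set ℝ := {a : ℝ | ∃ ψ : ℂ → ℂ, (∃ K : NNReal, LipschitzWith K ψ) ∧
    (∀ z ∈ unitCircle, ψ z = γ z) ∧ a = areaFunctional ψ} with hS₁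
  set S₂ : Set ℝ := {a : ℝ | ∃ ψ : ℂ → ℂ, (∃ K : NNReal, LipschitzWith K ψ) ∧
    (∀ z ∈ unitCircle, ψ z = (γ ∘ σ) z) ∧ a = areaFunctional ψ} with hS₂
  have hbdd₂ : BddBelow S₂ := by
    refine ⟨0, fun a ha => ?_⟩
    obtain ⟨ψ, _, _, rfl⟩ := ha
    exact areaFunctional_nonneg ψ
  have hne₁ : S₁.Nonempty := by
    obtain ⟨K₀, hK₀⟩ := hγ
    obtain ⟨K', g, hg, heg⟩ := exists_lipschitz_extension hK₀
    exact ⟨areaFunctional g, g, ⟨K', hg⟩, fun z hz => (heg hz).symm, rfl⟩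
  -- main step : each competitor for γ gives one for γ ∘ σ with smaller area
  have hmain : ∀ a ∈ S₁, ∃ b ∈ S₂, b ≤ a := by
    rintro a ⟨ψ, ⟨Kψ, hKψ⟩, hbd, rfl⟩
    refine ⟨areaFunctional (ψ ∘ τ), ⟨ψ ∘ τ, ⟨Kψ * (1 + 2 * Kσ), hKψ.comp hτl⟩, ?_, rfl⟩, ?_⟩
    · intro z hz
      have h1 : τ z = σ z := radExt_eq_on_circle hz
      show ψ (τ z) = γ (σ z)
      rw [h1, hbd _ (hσm hz)]
    -- area comparison
    · have hNψ : volume {y : ℂ | ¬ DifferentiableAt ℝ ψ y} = 0 := by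
        have h := hKψ.ae_differentiableAt (μ := volume)
        rwa [ae_iff] at h
      have hNτ : volume {x : ℂ | ¬ DifferentiableAt ℝ τ x} = 0 := by
        have h := hτl.ae_differentiableAt (μ := volume)
        rwa [ae_iff] at h
      set s : Set ℂ := (unitDisk ∩ {x | DifferentiableAt ℝ τ x}) ∩
        (τ ⁻¹' {y | DifferentiableAt ℝ ψ y}) with hsdef
      have hs : MeasurableSet s := by
        refine (MeasurableSet.inter ?_ ?_).inter ?_
        · exact measurableSet_closedBall
        · exact measurableSet_of_differentiableAt ℝ τ
        · exact hτl.continuous.measurable (measurableSet_of_differentiableAt ℝ ψ)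
      have hsub : s ⊆ unitDisk := fun x hx => hx.1.1
      have hnull : volume (unitDisk \ s) = 0 := by
        have hcover : unitDisk \ s ⊆ {x : ℂ | ¬ DifferentiableAt ℝ τ x} ∪
            (υ '' {y : ℂ | ¬ DifferentiableAt ℝ ψ y}) := by
          rintro x ⟨hxD, hxns⟩
          by_cases hτd : DifferentiableAt ℝ τ x
          · right
            have hψd : ¬ DifferentiableAt ℝ ψ (τ x) := by
              intro hcon
              exact hxns ⟨⟨hxD, hτd⟩, hcon⟩
            exact ⟨τ x, hψd, hυτ x⟩
          · exact Or.inl hτd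
        have hun : volume ({x : ℂ | ¬ DifferentiableAt ℝ τ x} ∪
            υ '' {y : ℂ | ¬ DifferentiableAt ℝ ψ y}) = 0 := by
          refine le_antisymm (le_trans (measure_union_le _ _) ?_) zero_le
          rw [hNτ, lipschitz_image_null hυl hNψ, add_zero]
        exact le_antisymm (le_trans (measure_mono hcover) hun.le) zero_le
      have hf' : ∀ x ∈ s, HasFDerivWithinAt τ (fderiv ℝ τ x) s x :=
        fun x hx => (hx.1.2.hasFDerivAt).hasFDerivWithinAt
      have hinj' : InjOn τ s := hτinj.injOn
      have hchain : ∀ x ∈ s, |(fderiv ℝ (ψ ∘ τ) x).det|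
          = |(fderiv ℝ τ x).det| * |(fderiv ℝ ψ (τ x)).det| := by
        intro x hx
        have hψd : DifferentiableAt ℝ ψ (τ x) := hx.2
        have hτd : DifferentiableAt ℝ τ x := hx.1.2
        have h1 : fderiv ℝ (ψ ∘ τ) x = (fderiv ℝ ψ (τ x)).comp (fderiv ℝ τ x) :=
          fderiv_comp (x := x) hψd hτd
        have h2 : ((fderiv ℝ ψ (τ x)).comp (fderiv ℝ τ x)).det
            = (fderiv ℝ ψ (τ x)).det * (fderiv ℝ τ x).det := by
          show LinearMap.det _ = _
          rw [ContinuousLinearMap.toLinearMap_comp]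
          exact LinearMap.det_comp _ _
        rw [h1, h2, abs_mul, mul_comm]
      have hDs : unitDisk =ᵐ[volume] s :=
        MeasureTheory.ae_eq_set.mpr ⟨hnull, by
          rw [Set.diff_eq_empty.mpr hsub, measure_empty]⟩
      calc areaFunctional (ψ ∘ τ) = ∫ x in unitDisk, |(fderiv ℝ (ψ ∘ τ) x).det| := rfl
        _ = ∫ x in s, |(fderiv ℝ (ψ ∘ τ) x).det| := setIntegral_congr_set hDs
        _ = ∫ x in s, |(fderiv ℝ τ x).det| • |(fderiv ℝ ψ (τ x)).det| := by
            refine setIntegral_congr_fun hs fun x hx => ?_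
            rw [smul_eq_mul]
            exact hchain x hx
        _ = ∫ y in τ '' s, |(fderiv ℝ ψ y).det| :=
            (integral_image_eq_integral_abs_det_fderiv_smul volume hs hf' hinj'
              (fun y => |(fderiv ℝ ψ y).det|)).symm
        _ ≤ ∫ y in unitDisk, |(fderiv ℝ ψ y).det| := by
            refine setIntegral_mono_set (integrableOn_abs_det_fderiv hKψ)
              (Eventually.of_forall fun y => abs_nonneg _) ?_
            exact HasSubset.Subset.eventuallyLE
              ((Set.image_mono (f := τ) hsub).trans hτD.image_subset)
        _ = areaFunctional ψ := rfl
  -- conclude via infima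
  show sInf S₂ ≤ sInf S₁
  refine le_csInf hne₁ fun a ha => ?_
  obtain ⟨b, hb, hba⟩ := hmain a ha
  exact le_trans (csInf_le hbdd₂ hb) hba

lemma minSpanArea_congr {γ₁ γ₂ : ℂ → ℂ} (h : ∀ z ∈ unitCircle, γ₁ z = γ₂ z) :
    minSpanArea γ₁ = minSpanArea γ₂ := by
  unfold minSpanArea
  congr 1
  ext a
  constructor
  · rintro ⟨ψ, hl, hb, rfl⟩
    exact ⟨ψ, hl, fun z hz => (hb z hz).trans (h z hz), rfl⟩
  · rintro ⟨ψ, hl, hb, rfl⟩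
    exact ⟨ψ, hl, fun z hz => (hb z hz).trans (h z hz).symm, rfl⟩

/-- **Corollary 2.8.** The spanned area is invariant under bi-Lipschitz reparametrizations of
`𝕊¹`. -/
theorem minSpanArea_reparam
    (γ : ℂ → ℂ) (hγ : ∃ K : NNReal, LipschitzOnWith K γ unitCircle)
    (σ : ℂ → ℂ) (hbij : Set.BijOn σ unitCircle unitCircle)
    (hlip : ∃ K : NNReal, LipschitzOnWith K σ unitCircle)
    (hanti : ∃ K : NNReal, ∀ x ∈ unitCircle, ∀ y ∈ unitCircle, ‖x - y‖ ≤ K * ‖σ x - σ y‖) :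
    minSpanArea γ = minSpanArea (γ ∘ σ) := by
  classical
  haveI : Nonempty ℂ := ⟨0⟩
  obtain ⟨Kσ, hσ⟩ := hlip
  obtain ⟨Ka, hKa⟩ := hanti
  set ρ : ℂ → ℂ := Function.invFunOn σ unitCircle with hρdef
  have hρm : MapsTo ρ unitCircle unitCircle := hbij.surjOn.mapsTo_invFunOn
  have hlio : ∀ z ∈ unitCircle, ρ (σ z) = z := fun z hz =>
    hbij.injOn.leftInvOn_invFunOn hz
  have hrio : ∀ w ∈ unitCircle, σ (ρ w) = w := fun w hw =>
    hbij.surjOn.rightInvOn_invFunOn hw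
  have hρl : LipschitzOnWith Ka ρ unitCircle := by
    rw [lipschitzOnWith_iff_dist_le_mul]
    intro x hx y hy
    rw [dist_eq_norm, dist_eq_norm]
    calc ‖ρ x - ρ y‖ ≤ Ka * ‖σ (ρ x) - σ (ρ y)‖ := hKa _ (hρm hx) _ (hρm hy)
      _ = Ka * ‖x - y‖ := by rw [hrio x hx, hrio y hy]
  have hγσ : ∃ K : NNReal, LipschitzOnWith K (γ ∘ σ) unitCircle := by
    obtain ⟨Kγ, hKγ⟩ := hγ
    exact ⟨Kγ * Kσ, hKγ.comp hσ hbij.mapsTo⟩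
  -- direction 1
  have h1 : minSpanArea (γ ∘ σ) ≤ minSpanArea γ :=
    minSpanArea_comp_le γ σ ρ hγ hbij.mapsTo hρm ⟨Kσ, hσ⟩ ⟨Ka, hρl⟩ hlio
  -- direction 2
  have h2 : minSpanArea γ ≤ minSpanArea (γ ∘ σ) := by
    have h3 : minSpanArea ((γ ∘ σ) ∘ ρ) ≤ minSpanArea (γ ∘ σ) :=
      minSpanArea_comp_le (γ ∘ σ) ρ σ hγσ hρm hbij.mapsTo ⟨Ka, hρl⟩ ⟨Kσ, hσ⟩ hrio
    have h4 : minSpanArea ((γ ∘ σ) ∘ ρ) = minSpanArea γ := by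
      apply minSpanArea_congr
      intro z hz
      show γ (σ (ρ z)) = γ z
      rw [hrio z hz]
    rw [← h4]
    exact h3
  exact le_antisymm h2 h1
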